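/- Let A be an associative algebra, 𝔩 a Lie algebra, and ε : 𝒰(𝔩) → A an algebra homomorphism, so that 𝔩 acts on A by derivations x·a = [ε(x),a]. Then in the smash product A ∗ 𝒰(𝔩), the map α : 𝒰(𝔩) → A ∗ 𝒰(𝔩) obtained by composing the principal anti-automorphism x ↦ -x of 𝒰(𝔩) with x ↦ 1⊗x − ε(x)⊗1 restricts on the center Z(𝒰(𝔩)) to an algebra homomorphism landing in the center of A ∗ 𝒰(𝔩). -/

import Mathlib

/-!
Every `ᾱ(u)` commutes with `A`, because the smash relation says exactly that `ε(x) ⊗ 1` and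
`1 ⊗ x` have the same commutator with `A`. The anti-automorphism preserves `Z(𝒰(𝔩))`, so for
central `z` the element `ᾱ(can z)` commutes with `ᾱ(𝒰(𝔩))` and with `A`, hence with
`1 ⊗ x = ᾱ(x) + ε(x) ⊗ 1`; as `A` and the `1 ⊗ x` generate `A ∗ 𝒰(𝔩)`, it is central.
Multiplicativity on the center then follows from centrality of the image.
-/

open UniversalEnvelopingAlgebra

structure SmashProduct (A : Type) [Ring A] [Algebra ℂ A]
    (L : Type) [LieRing L] [LieAlgebra ℂ L]
    (ε : UniversalEnvelopingAlgebra ℂ L →ₐ[ℂ] A)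
    (S : Type) [Ring S] [Algebra ℂ S] where
  jA : A →ₐ[ℂ] S
  jU : UniversalEnvelopingAlgebra ℂ L →ₐ[ℂ] S
  smash_rel : ∀ (x : L) (a : A),
    jU (ι ℂ x) * jA a = jA (ε (ι ℂ x) * a - a * ε (ι ℂ x)) + jA a * jU (ι ℂ x)
  pbw : TensorProduct ℂ A (UniversalEnvelopingAlgebra ℂ L) ≃ₗ[ℂ] S
  pbw_apply : ∀ (a : A) (u : UniversalEnvelopingAlgebra ℂ L),
    pbw (a ⊗ₜ[ℂ] u) = jA a * jU u

namespace UniversalEnvelopingAlgebra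

variable {R L B : Type*} [CommRing R] [LieRing L] [LieAlgebra R L] [Ring B] [Algebra R B]

theorem adjoin_range_ι :
    Algebra.adjoin R (Set.range (ι R : L → UniversalEnvelopingAlgebra R L)) = ⊤ := by
  have hι : Set.range (ι R : L → UniversalEnvelopingAlgebra R L) =
      mkAlgHom R L '' Set.range (TensorAlgebra.ι R) := by
    rw [← Set.range_comp]; rfl
  rw [hι, ← AlgHom.map_adjoin, TensorAlgebra.adjoin_range_ι, Algebra.map_top]
  exact RingCon.range_mkₐ

theorem commute_of_forall_commute_ι (f : UniversalEnvelopingAlgebra R L →ₐ[R] B) {s : B}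
    (h : ∀ x, Commute s (f (ι R x))) (u : UniversalEnvelopingAlgebra R L) :
    Commute s (f u) := by
  have hle : Algebra.adjoin R (Set.range (ι R : L → UniversalEnvelopingAlgebra R L)) ≤
      (Subalgebra.centralizer R {s}).comap f :=
    Algebra.adjoin_le <| by
      rintro _ ⟨x, rfl⟩
      simpa [Set.mem_centralizer_iff] using (h x).eq
  have hu := hle (adjoin_range_ι (R := R) (L := L) ▸ Algebra.mem_top : u ∈ _)
  exact Subalgebra.mem_centralizer_iff R |>.mp hu s rfl

theorem mem_center_of_forall_commute_ι {z : UniversalEnvelopingAlgebra R L}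
    (h : ∀ x, Commute z (ι R x)) : z ∈ Subalgebra.center R (UniversalEnvelopingAlgebra R L) :=
  Subalgebra.mem_center_iff.mpr fun u => (commute_of_forall_commute_ι (AlgHom.id R _) h u).eq.symm

theorem antihom_map_mem_center
    {σ : UniversalEnvelopingAlgebra R L →ₗ[R] UniversalEnvelopingAlgebra R L}
    (hmul : ∀ u v, σ (u * v) = σ v * σ u) (hι : ∀ x, σ (ι R x) = -ι R x)
    {z : UniversalEnvelopingAlgebra R L}
    (hz : z ∈ Subalgebra.center R (UniversalEnvelopingAlgebra R L)) :
    σ z ∈ Subalgebra.center R (UniversalEnvelopingAlgebra R L) :=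
  mem_center_of_forall_commute_ι fun x => by
    have h := congrArg σ (Subalgebra.mem_center_iff.mp hz (ι R x))
    rw [hmul, hmul, hι, mul_neg, neg_mul, neg_inj] at h
    exact h

end UniversalEnvelopingAlgebra

namespace SmashProduct

variable {A : Type} [Ring A] [Algebra ℂ A] {L : Type} [LieRing L] [LieAlgebra ℂ L]
  {ε : UniversalEnvelopingAlgebra ℂ L →ₐ[ℂ] A} {S : Type} [Ring S] [Algebra ℂ S]
  (sp : SmashProduct A L ε S)

theorem commute_jA_of_map_ι (f : UniversalEnvelopingAlgebra ℂ L →ₐ[ℂ] S)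
    (hf : ∀ x, f (ι ℂ x) = sp.jU (ι ℂ x) - sp.jA (ε (ι ℂ x))) (a : A)
    (u : UniversalEnvelopingAlgebra ℂ L) : Commute (sp.jA a) (f u) :=
  commute_of_forall_commute_ι f (fun x => by
    show _ * _ = _ * _
    rw [hf, mul_sub, sub_mul, sp.smash_rel, map_sub, map_mul, map_mul]
    abel) u

theorem mem_center_of_commute {s : S} (hA : ∀ a, Commute s (sp.jA a))
    (hU : ∀ x, Commute s (sp.jU (ι ℂ x))) : s ∈ Subalgebra.center ℂ S := by
  refine Subalgebra.mem_center_iff.mpr fun t => ?_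
  obtain ⟨t, rfl⟩ := sp.pbw.surjective t
  induction t using TensorProduct.induction_on with
  | zero => simp
  | tmul a u =>
    rw [sp.pbw_apply]
    exact ((hA a).mul_right (commute_of_forall_commute_ι sp.jU hU u)).eq.symm
  | add t₁ t₂ h₁ h₂ => rw [map_add, add_mul, mul_add, h₁, h₂]

end SmashProduct

theorem alpha_central_on_center
    (A : Type) [Ring A] [Algebra ℂ A]
    (L : Type) [LieRing L] [LieAlgebra ℂ L]
    (ε : UniversalEnvelopingAlgebra ℂ L →ₐ[ℂ] A)
    (S : Type) [Ring S] [Algebra ℂ S]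
    (sp : SmashProduct A L ε S)
    -- the principal anti-automorphism `can` of 𝒰(𝔩), `x ↦ -x` on generators:
    (can : UniversalEnvelopingAlgebra ℂ L →ₗ[ℂ] UniversalEnvelopingAlgebra ℂ L)
    (hcan_one : can 1 = 1)
    (hcan_mul : ∀ u v, can (u * v) = can v * can u)
    (hcan_gen : ∀ x : L, can (ι ℂ x) = - ι ℂ x)
    -- the algebra homomorphism ᾱ : 𝒰(𝔩) → A ∗ 𝒰(𝔩), x ↦ 1⊗x − ε(x)⊗1:
    (alphaBar : UniversalEnvelopingAlgebra ℂ L →ₐ[ℂ] S)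
    (halphaBar : ∀ x : L, alphaBar (ι ℂ x) = sp.jU (ι ℂ x) - sp.jA (ε (ι ℂ x))) :
    -- α := ᾱ ∘ can maps Z(𝒰(𝔩)) into Z(A ∗ 𝒰(𝔩)) and is an algebra homomorphism there:
    (∀ z ∈ Subalgebra.center ℂ (UniversalEnvelopingAlgebra ℂ L),
        alphaBar (can z) ∈ Subalgebra.center ℂ S) ∧
    alphaBar (can 1) = 1 ∧
    (∀ z ∈ Subalgebra.center ℂ (UniversalEnvelopingAlgebra ℂ L),
      ∀ z' ∈ Subalgebra.center ℂ (UniversalEnvelopingAlgebra ℂ L),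
        alphaBar (can (z * z')) = alphaBar (can z) * alphaBar (can z')) := by
  have hcent : ∀ z ∈ Subalgebra.center ℂ (UniversalEnvelopingAlgebra ℂ L),
      alphaBar (can z) ∈ Subalgebra.center ℂ S := by
    intro z hz
    have hcz := antihom_map_mem_center hcan_mul hcan_gen hz
    have hU : ∀ u, Commute (alphaBar (can z)) (alphaBar u) := fun u =>
      Commute.map (Subalgebra.mem_center_iff.mp hcz u).symm alphaBar
    have hA : ∀ a, Commute (alphaBar (can z)) (sp.jA a) := fun a =>
      (sp.commute_jA_of_map_ι alphaBar halphaBar a _).symm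
    refine sp.mem_center_of_commute hA fun x => ?_
    have hjU : sp.jU (ι ℂ x) = alphaBar (ι ℂ x) + sp.jA (ε (ι ℂ x)) := by
      rw [halphaBar, sub_add_cancel]
    rw [hjU]
    exact (hU _).add_right (hA _)
  refine ⟨hcent, by rw [hcan_one, map_one], fun z hz z' _ => ?_⟩
  rw [hcan_mul, map_mul]
  exact Subalgebra.mem_center_iff.mp (hcent z hz) _
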